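/- The set G₀ of matrices a(C,B,Z,b) = [[LᵗC⁻¹L, ᵗZ, b],[0, B, BZLC],[0, 0, C]] with C ∈ GL₊(2,ℝ), B ∈ SO(2,ℝ), Z, b ∈ gl(2,ℝ) satisfying bC⁻¹L + LᵗC⁻¹ᵗb = ᵗZZ, is closed under matrix multiplication and inversion, i.e., forms a group. -/
import Mathlib


open Matrix

/-- The 2×2 matrix L = [[0,1],[1,0]]. -/
def Lm : Matrix (Fin 2) (Fin 2) ℝ := !![0, 1; 1, 0]

/-- The 2×2 matrix I₁,₁ = diag(1,-1). -/
def I11 : Matrix (Fin 2) (Fin 2) ℝ := !![1, 0; 0, -1]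

/-- Assemble a 6×6 matrix from a 3×3 array of 2×2 blocks. -/
def blk (M : Matrix (Fin 3) (Fin 3) (Matrix (Fin 2) (Fin 2) ℝ)) :
    Matrix (Fin 6) (Fin 6) ℝ :=
  Matrix.of fun i j =>
    M ⟨i.val / 2, by have := i.isLt; omega⟩ ⟨j.val / 2, by have := j.isLt; omega⟩
      ⟨i.val % 2, by have := i.isLt; omega⟩ ⟨j.val % 2, by have := j.isLt; omega⟩

/-- The matrix h of the Lie sphere bilinear form, in 2×2 blocks. -/
def hm : Matrix (Fin 6) (Fin 6) ℝ := blk !![0, 0, -Lm; 0, 1, 0; -Lm, 0, 0]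

/-- The block matrix a(C,B,Z,b). -/
noncomputable def aMat (C B Z b : Matrix (Fin 2) (Fin 2) ℝ) :
    Matrix (Fin 6) (Fin 6) ℝ :=
  blk !![Lm * (C⁻¹)ᵀ * Lm, Zᵀ, b;
         0, B, B * Z * Lm * C;
         0, 0, C]

/-- Membership in G₀: a = a(C,B,Z,b) with C ∈ GL₊(2), B ∈ SO(2), and
b C⁻¹ L + L ᵗC⁻¹ ᵗb = ᵗZ Z. -/
def memG0 (a : Matrix (Fin 6) (Fin 6) ℝ) : Prop :=
  ∃ C B Z b : Matrix (Fin 2) (Fin 2) ℝ,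
    0 < C.det ∧ Bᵀ * B = 1 ∧ B.det = 1 ∧
    b * C⁻¹ * Lm + Lm * (C⁻¹)ᵀ * bᵀ = Zᵀ * Z ∧
    a = aMat C B Z b

/-! ### Auxiliary lemmas -/

local notation "M2" => Matrix (Fin 2) (Fin 2) ℝ

lemma hL : Lm * Lm = 1 := by
  rw [Lm, Matrix.mul_fin_two, Matrix.one_fin_two]; norm_num

lemma hLT : Lmᵀ = Lm := by
  rw [Lm]; ext i j; fin_cases i <;> fin_cases j <;> rfl

set_option maxHeartbeats 2000000 in
lemma blk_mul (M N : Matrix (Fin 3) (Fin 3) (Matrix (Fin 2) (Fin 2) ℝ)) :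
    blk M * blk N = blk (M * N) := by
  ext ⟨i, hi⟩ ⟨j, hj⟩
  interval_cases i <;> interval_cases j <;>
    simp only [blk, Matrix.mul_apply, Matrix.of_apply, Matrix.add_apply, Fin.sum_univ_six,
      Fin.sum_univ_three, Fin.sum_univ_two, Fin.isValue, Nat.reduceDiv, Nat.reduceMod,
      Fin.mk_zero, Fin.mk_one, Fin.val_zero, Fin.val_one,
      show ((2:Fin 6):ℕ) = 2 from rfl, show ((3:Fin 6):ℕ) = 3 from rfl,
      show ((4:Fin 6):ℕ) = 4 from rfl, show ((5:Fin 6):ℕ) = 5 from rfl,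
      show ((⟨2, by norm_num⟩ : Fin 3) = 2) from rfl] <;>
    ring

set_option maxHeartbeats 1000000 in
lemma blk_one : blk !![1,0,0;0,1,0;0,0,1] = 1 := by
  ext ⟨i, hi⟩ ⟨j, hj⟩
  interval_cases i <;> interval_cases j <;>
    norm_num [blk, Matrix.one_apply, Fin.ext_iff]

lemma aMat_mul (C1 B1 Z1 b1 C2 B2 Z2 b2 : M2) (hC1 : C1⁻¹ * C1 = 1) (hB2 : B2 * B2ᵀ = 1) :
    aMat C1 B1 Z1 b1 * aMat C2 B2 Z2 b2 =
    aMat (C1*C2) (B1*B2) (B2ᵀ*Z1 + Z2*Lm*C1⁻¹*Lm)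
      (Lm * (C1⁻¹)ᵀ * Lm * b2 + Z1ᵀ * (B2 * Z2 * Lm * C2) + b1 * C2) := by
  unfold aMat
  rw [blk_mul]
  refine congrArg blk ?_
  rw [Matrix.mul_fin_three]
  have h11 : Lm * (C1⁻¹)ᵀ * Lm * (Lm * (C2⁻¹)ᵀ * Lm) = Lm * ((C1*C2)⁻¹)ᵀ * Lm := by
    rw [Matrix.mul_inv_rev, Matrix.transpose_mul]
    calc Lm * (C1⁻¹)ᵀ * Lm * (Lm * (C2⁻¹)ᵀ * Lm)
        = Lm * ((C1⁻¹)ᵀ * ((Lm * Lm) * ((C2⁻¹)ᵀ * Lm))) := by noncomm_ring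
      _ = Lm * ((C1⁻¹)ᵀ * (C2⁻¹)ᵀ) * Lm := by rw [hL]; noncomm_ring
  have h12 : Lm * (C1⁻¹)ᵀ * Lm * Z2ᵀ + Z1ᵀ * B2 = (B2ᵀ*Z1 + Z2*Lm*C1⁻¹*Lm)ᵀ := by
    simp only [Matrix.transpose_add, Matrix.transpose_mul, Matrix.transpose_transpose, hLT]
    noncomm_ring
  have h23 : B1 * (B2 * Z2 * Lm * C2) + B1 * Z1 * Lm * C1 * C2
      = B1 * B2 * (B2ᵀ*Z1 + Z2*Lm*C1⁻¹*Lm) * Lm * (C1 * C2) := by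
    calc B1 * (B2 * Z2 * Lm * C2) + B1 * Z1 * Lm * C1 * C2
        = B1 * (B2 * (Z2 * (Lm * (C1⁻¹ * C1) * C2)))
          + B1 * ((B2 * B2ᵀ) * (Z1 * (Lm * (C1 * C2)))) := by rw [hC1, hB2]; noncomm_ring
      _ = B1 * (B2 * (Z2 * (Lm * C1⁻¹ * ((Lm * Lm) * (C1 * C2)))))
          + B1 * (B2 * (B2ᵀ * (Z1 * (Lm * (C1 * C2))))) := by rw [hL]; noncomm_ring
      _ = B1 * B2 * (B2ᵀ*Z1 + Z2*Lm*C1⁻¹*Lm) * Lm * (C1 * C2) := by noncomm_ring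
  simp only [Matrix.zero_mul, Matrix.mul_zero, zero_mul, mul_zero, add_zero, zero_add]
  rw [h11, h12, h23]

lemma aMat_one : aMat 1 1 0 0 = 1 := by
  unfold aMat
  have h1 : ((1:M2)⁻¹) = 1 := Matrix.inv_eq_right_inv (by rw [one_mul])
  rw [h1, Matrix.transpose_one,
    show Lm * (1:M2) * Lm = 1 from by rw [mul_one, hL],
    Matrix.transpose_zero,
    show (1:M2) * 0 * Lm * 1 = 0 from by simp]
  exact blk_one

lemma prod_cond (C1 Z1 b1 C2 B2 Z2 b2 : M2)
    (hC2 : C2 * C2⁻¹ = 1) (hB2 : B2 * B2ᵀ = 1)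
    (H1 : b1 * C1⁻¹ * Lm + Lm * (C1⁻¹)ᵀ * b1ᵀ = Z1ᵀ * Z1)
    (H2 : b2 * C2⁻¹ * Lm + Lm * (C2⁻¹)ᵀ * b2ᵀ = Z2ᵀ * Z2) :
    (Lm * (C1⁻¹)ᵀ * Lm * b2 + Z1ᵀ * (B2 * Z2 * Lm * C2) + b1 * C2) * (C1*C2)⁻¹ * Lm
      + Lm * ((C1*C2)⁻¹)ᵀ * (Lm * (C1⁻¹)ᵀ * Lm * b2 + Z1ᵀ * (B2 * Z2 * Lm * C2) + b1 * C2)ᵀ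
      = (B2ᵀ*Z1 + Z2*Lm*C1⁻¹*Lm)ᵀ * (B2ᵀ*Z1 + Z2*Lm*C1⁻¹*Lm) := by
  rw [Matrix.mul_inv_rev]
  set b' := Lm * (C1⁻¹)ᵀ * Lm * b2 + Z1ᵀ * (B2 * Z2 * Lm * C2) + b1 * C2 with hb'
  have hXT : Lm * (C2⁻¹ * C1⁻¹)ᵀ * b'ᵀ = (b' * (C2⁻¹ * C1⁻¹) * Lm)ᵀ := by
    simp only [Matrix.transpose_mul, hLT]; noncomm_ring
  rw [hXT]
  have hX1 : Lm*(C1⁻¹)ᵀ*Lm*(b2*C2⁻¹*Lm)*(Lm*C1⁻¹*Lm)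
      = Lm*(C1⁻¹)ᵀ*Lm*(b2*(C2⁻¹*(C1⁻¹*Lm))) := by
    calc Lm*(C1⁻¹)ᵀ*Lm*(b2*C2⁻¹*Lm)*(Lm*C1⁻¹*Lm)
        = Lm*(C1⁻¹)ᵀ*Lm*(b2*(C2⁻¹*((Lm*Lm)*(C1⁻¹*Lm)))) := by noncomm_ring
      _ = _ := by rw [hL]; try noncomm_ring
  have hX : b' * (C2⁻¹ * C1⁻¹) * Lm
      = Lm*(C1⁻¹)ᵀ*Lm*(b2*C2⁻¹*Lm)*(Lm*C1⁻¹*Lm) + Z1ᵀ*B2*Z2*(Lm*C1⁻¹*Lm) + b1*C1⁻¹*Lm := by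
    rw [hb']
    calc (Lm * (C1⁻¹)ᵀ * Lm * b2 + Z1ᵀ * (B2 * Z2 * Lm * C2) + b1 * C2) * (C2⁻¹ * C1⁻¹) * Lm
        = Lm*(C1⁻¹)ᵀ*Lm*(b2*(C2⁻¹*(C1⁻¹*Lm)))
          + Z1ᵀ*(B2*(Z2*(Lm*((C2*C2⁻¹)*(C1⁻¹*Lm))))) + b1*((C2*C2⁻¹)*(C1⁻¹*Lm)) := by
            noncomm_ring
      _ = Lm*(C1⁻¹)ᵀ*Lm*(b2*(C2⁻¹*(C1⁻¹*Lm)))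
          + Z1ᵀ*B2*Z2*(Lm*C1⁻¹*Lm) + b1*C1⁻¹*Lm := by rw [hC2]; try noncomm_ring
      _ = Lm*(C1⁻¹)ᵀ*Lm*(b2*C2⁻¹*Lm)*(Lm*C1⁻¹*Lm)
          + Z1ᵀ*B2*Z2*(Lm*C1⁻¹*Lm) + b1*C1⁻¹*Lm := by rw [hX1]
  rw [hX]
  calc (Lm*(C1⁻¹)ᵀ*Lm*(b2*C2⁻¹*Lm)*(Lm*C1⁻¹*Lm) + Z1ᵀ*B2*Z2*(Lm*C1⁻¹*Lm) + b1*C1⁻¹*Lm)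
        + (Lm*(C1⁻¹)ᵀ*Lm*(b2*C2⁻¹*Lm)*(Lm*C1⁻¹*Lm) + Z1ᵀ*B2*Z2*(Lm*C1⁻¹*Lm) + b1*C1⁻¹*Lm)ᵀ
      = Lm*(C1⁻¹)ᵀ*Lm*(b2*C2⁻¹*Lm + Lm*(C2⁻¹)ᵀ*b2ᵀ)*(Lm*C1⁻¹*Lm)
        + (b1*C1⁻¹*Lm + Lm*(C1⁻¹)ᵀ*b1ᵀ)
        + (Z1ᵀ*B2*Z2*(Lm*C1⁻¹*Lm) + Lm*(C1⁻¹)ᵀ*Lm*Z2ᵀ*B2ᵀ*Z1) := by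
          simp only [Matrix.transpose_add, Matrix.transpose_mul, Matrix.transpose_transpose, hLT]
          noncomm_ring
    _ = Lm*(C1⁻¹)ᵀ*Lm*(Z2ᵀ*Z2)*(Lm*C1⁻¹*Lm) + Z1ᵀ*Z1
        + (Z1ᵀ*B2*Z2*(Lm*C1⁻¹*Lm) + Lm*(C1⁻¹)ᵀ*Lm*Z2ᵀ*B2ᵀ*Z1) := by rw [H1, H2]
    _ = (B2ᵀ*Z1 + Z2*Lm*C1⁻¹*Lm)ᵀ * (B2ᵀ*Z1 + Z2*Lm*C1⁻¹*Lm) := by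
        have e1 : (B2ᵀ*Z1 + Z2*Lm*C1⁻¹*Lm)ᵀ * (B2ᵀ*Z1 + Z2*Lm*C1⁻¹*Lm)
            = Z1ᵀ*((B2*B2ᵀ)*Z1) + Z1ᵀ*B2*Z2*(Lm*C1⁻¹*Lm)
              + Lm*(C1⁻¹)ᵀ*Lm*Z2ᵀ*B2ᵀ*Z1 + Lm*(C1⁻¹)ᵀ*Lm*(Z2ᵀ*Z2)*(Lm*C1⁻¹*Lm) := by
          simp only [Matrix.transpose_add, Matrix.transpose_mul, Matrix.transpose_transpose, hLT]
          noncomm_ring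
        rw [e1, hB2]; noncomm_ring

/-- G₀ is closed under matrix multiplication and inversion. -/
theorem stmt11 :
    (∀ a₁ a₂, memG0 a₁ → memG0 a₂ → memG0 (a₁ * a₂)) ∧
    (∀ a, memG0 a → memG0 a⁻¹) := by
  constructor
  · rintro a1 a2 ⟨C1, B1, Z1, b1, hd1, ho1, he1, hc1, rfl⟩
      ⟨C2, B2, Z2, b2, hd2, ho2, he2, hc2, rfl⟩
    have hu1 : IsUnit C1.det := isUnit_iff_ne_zero.mpr (ne_of_gt hd1)
    have hu2 : IsUnit C2.det := isUnit_iff_ne_zero.mpr (ne_of_gt hd2)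
    have hC1i : C1⁻¹ * C1 = 1 := Matrix.nonsing_inv_mul _ hu1
    have hC2m : C2 * C2⁻¹ = 1 := Matrix.mul_nonsing_inv _ hu2
    have hB2 : B2 * B2ᵀ = 1 := mul_eq_one_comm.mp ho2
    refine ⟨C1*C2, B1*B2, B2ᵀ*Z1 + Z2*Lm*C1⁻¹*Lm,
      Lm * (C1⁻¹)ᵀ * Lm * b2 + Z1ᵀ * (B2 * Z2 * Lm * C2) + b1 * C2, ?_, ?_, ?_, ?_, ?_⟩
    · rw [Matrix.det_mul]; exact mul_pos hd1 hd2
    · calc (B1*B2)ᵀ*(B1*B2) = B2ᵀ*((B1ᵀ*B1)*B2) := by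
            rw [Matrix.transpose_mul]; noncomm_ring
        _ = 1 := by rw [ho1, one_mul, ho2]
    · rw [Matrix.det_mul, he1, he2, mul_one]
    · exact prod_cond C1 Z1 b1 C2 B2 Z2 b2 hC2m hB2 hc1 hc2
    · exact aMat_mul C1 B1 Z1 b1 C2 B2 Z2 b2 hC1i hB2
  · rintro a ⟨C, B, Z, b, hd, ho, he, hc, rfl⟩
    have hu : IsUnit C.det := isUnit_iff_ne_zero.mpr (ne_of_gt hd)
    have hCC : C * C⁻¹ = 1 := Matrix.mul_nonsing_inv _ hu
    have hCC' : C⁻¹ * C = 1 := Matrix.nonsing_inv_mul _ hu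
    have hBB : B * Bᵀ = 1 := mul_eq_one_comm.mp ho
    have hCT : (C⁻¹)ᵀ * Cᵀ = 1 := by rw [← Matrix.transpose_mul, hCC, Matrix.transpose_one]
    have hCT2 : Cᵀ * (C⁻¹)ᵀ = 1 := by rw [← Matrix.transpose_mul, hCC', Matrix.transpose_one]
    refine ⟨C⁻¹, Bᵀ, -(B*Z*Lm*C*Lm), Lm*Cᵀ*Lm*(Zᵀ*Z*Lm - b*C⁻¹), ?_, ?_, ?_, ?_, ?_⟩
    · rw [Matrix.det_nonsing_inv, Ring.inverse_eq_inv']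
      exact inv_pos.mpr hd
    · rw [Matrix.transpose_transpose]; exact hBB
    · rw [Matrix.det_transpose, he]
    · -- the quadratic condition for the inverse
      rw [Matrix.nonsing_inv_nonsing_inv _ hu]
      have h2 : Lm * Cᵀ * (Lm*Cᵀ*Lm*(Zᵀ*Z*Lm - b*C⁻¹))ᵀ
          = (Lm*Cᵀ*Lm*(Zᵀ*Z*Lm - b*C⁻¹) * C * Lm)ᵀ := by
        simp only [Matrix.transpose_mul, Matrix.transpose_sub, Matrix.transpose_transpose, hLT]
        noncomm_ring
      rw [h2]
      have hw : Lm*Cᵀ*Lm*(Zᵀ*Z*Lm - b*C⁻¹) * C * Lm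
          = Lm*Cᵀ*Lm*(Zᵀ*Z)*(Lm*C*Lm) - Lm*(Cᵀ*(Lm*(b*Lm))) := by
        calc Lm*Cᵀ*Lm*(Zᵀ*Z*Lm - b*C⁻¹) * C * Lm
            = Lm*Cᵀ*Lm*(Zᵀ*Z)*(Lm*(C*Lm)) - Lm*(Cᵀ*(Lm*(b*((C⁻¹*C)*Lm)))) := by noncomm_ring
          _ = _ := by rw [hCC']; noncomm_ring
      rw [hw]
      have hGT : (Lm*Cᵀ*Lm*(Zᵀ*Z)*(Lm*C*Lm) - Lm*(Cᵀ*(Lm*(b*Lm))))ᵀ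
          = Lm*Cᵀ*Lm*(Zᵀ*Z)*(Lm*C*Lm) - Lm*(bᵀ*(Lm*(C*Lm))) := by
        simp only [Matrix.transpose_sub, Matrix.transpose_mul, Matrix.transpose_transpose, hLT]
        noncomm_ring
      rw [hGT]
      have hA : Lm*Cᵀ*Lm*(Zᵀ*Z)*(Lm*C*Lm)
          = Lm*(Cᵀ*(Lm*(b*Lm))) + Lm*(bᵀ*(Lm*(C*Lm))) := by
        rw [← hc]
        calc Lm*Cᵀ*Lm*(b * C⁻¹ * Lm + Lm * (C⁻¹)ᵀ * bᵀ)*(Lm*C*Lm)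
            = Lm*(Cᵀ*(Lm*(b*(C⁻¹*((Lm*Lm)*(C*Lm))))))
              + Lm*((Cᵀ*((Lm*Lm)*(C⁻¹)ᵀ))*(bᵀ*(Lm*(C*Lm)))) := by noncomm_ring
          _ = Lm*(Cᵀ*(Lm*(b*((C⁻¹*C)*Lm))))
              + Lm*((Cᵀ*(C⁻¹)ᵀ)*(bᵀ*(Lm*(C*Lm)))) := by rw [hL]; noncomm_ring
          _ = _ := by rw [hCC', hCT2]; noncomm_ring
      have hZ2 : (-(B*Z*Lm*C*Lm))ᵀ * (-(B*Z*Lm*C*Lm)) = Lm*Cᵀ*Lm*(Zᵀ*Z)*(Lm*C*Lm) := by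
        rw [Matrix.transpose_neg, neg_mul_neg,
          show (B*Z*Lm*C*Lm)ᵀ = Lm*(Cᵀ*(Lm*(Zᵀ*Bᵀ))) from by
            simp only [Matrix.transpose_mul, hLT]; try noncomm_ring]
        calc Lm*(Cᵀ*(Lm*(Zᵀ*Bᵀ))) * (B*Z*Lm*C*Lm)
            = Lm*(Cᵀ*(Lm*(Zᵀ*((Bᵀ*B)*(Z*(Lm*(C*Lm))))))) := by noncomm_ring
          _ = _ := by rw [ho]; noncomm_ring
      rw [hZ2]
      calc (Lm*Cᵀ*Lm*(Zᵀ*Z)*(Lm*C*Lm) - Lm*(Cᵀ*(Lm*(b*Lm))))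
            + (Lm*Cᵀ*Lm*(Zᵀ*Z)*(Lm*C*Lm) - Lm*(bᵀ*(Lm*(C*Lm))))
          = Lm*Cᵀ*Lm*(Zᵀ*Z)*(Lm*C*Lm) + Lm*Cᵀ*Lm*(Zᵀ*Z)*(Lm*C*Lm)
            - (Lm*(Cᵀ*(Lm*(b*Lm))) + Lm*(bᵀ*(Lm*(C*Lm)))) := by noncomm_ring
        _ = Lm*Cᵀ*Lm*(Zᵀ*Z)*(Lm*C*Lm) + Lm*Cᵀ*Lm*(Zᵀ*Z)*(Lm*C*Lm)
            - Lm*Cᵀ*Lm*(Zᵀ*Z)*(Lm*C*Lm) := by rw [← hA]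
        _ = Lm*Cᵀ*Lm*(Zᵀ*Z)*(Lm*C*Lm) := by noncomm_ring
    · -- a⁻¹ = aMat C⁻¹ Bᵀ Z₂ b₂
      apply Matrix.inv_eq_right_inv
      rw [aMat_mul C B Z b C⁻¹ Bᵀ (-(B*Z*Lm*C*Lm)) (Lm*Cᵀ*Lm*(Zᵀ*Z*Lm - b*C⁻¹)) hCC'
        (by rw [Matrix.transpose_transpose]; exact ho)]
      have hZ0 : Bᵀᵀ*Z + (-(B*Z*Lm*C*Lm))*Lm*C⁻¹*Lm = 0 := by
        rw [Matrix.transpose_transpose]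
        calc B*Z + (-(B*Z*Lm*C*Lm))*Lm*C⁻¹*Lm
            = B*Z - B*(Z*(Lm*(C*((Lm*Lm)*(C⁻¹*Lm))))) := by noncomm_ring
          _ = B*Z - B*(Z*(Lm*((C*C⁻¹)*Lm))) := by rw [hL]; noncomm_ring
          _ = B*Z - B*(Z*(Lm*Lm)) := by rw [hCC]; noncomm_ring
          _ = 0 := by rw [hL]; noncomm_ring
      have hb0 : Lm * (C⁻¹)ᵀ * Lm * (Lm*Cᵀ*Lm*(Zᵀ*Z*Lm - b*C⁻¹))
          + Zᵀ * (Bᵀ * (-(B*Z*Lm*C*Lm)) * Lm * C⁻¹) + b * C⁻¹ = 0 := by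
        calc Lm * (C⁻¹)ᵀ * Lm * (Lm*Cᵀ*Lm*(Zᵀ*Z*Lm - b*C⁻¹))
              + Zᵀ * (Bᵀ * (-(B*Z*Lm*C*Lm)) * Lm * C⁻¹) + b * C⁻¹
            = Lm*(((C⁻¹)ᵀ*((Lm*Lm)*Cᵀ))*(Lm*(Zᵀ*(Z*Lm) - b*C⁻¹)))
              - Zᵀ*((Bᵀ*B)*(Z*(Lm*(C*((Lm*Lm)*C⁻¹))))) + b*C⁻¹ := by noncomm_ring
          _ = Lm*(((C⁻¹)ᵀ*Cᵀ)*(Lm*(Zᵀ*(Z*Lm) - b*C⁻¹)))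
              - Zᵀ*(Z*(Lm*(C*C⁻¹))) + b*C⁻¹ := by rw [hL, ho]; noncomm_ring
          _ = Lm*(Lm*(Zᵀ*(Z*Lm) - b*C⁻¹)) - Zᵀ*(Z*Lm) + b*C⁻¹ := by
              rw [hCT, hCC]; noncomm_ring
          _ = (Lm*Lm)*(Zᵀ*(Z*Lm)) - (Lm*Lm)*(b*C⁻¹) - Zᵀ*(Z*Lm) + b*C⁻¹ := by noncomm_ring
          _ = 0 := by rw [hL]; noncomm_ring
      rw [hZ0, hb0, hCC, hBB]
      exact aMat_one
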